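/- Let 𝐓 be a set of α-tangles in a parity game, let A ⊆ V, and let Z = TAttr_α^𝐓(A) be the tangle attractor of A for player α. Then player α has a strategy σ defined on the α-vertices of Z ∖ A such that every play consistent with σ that starts in Z either visits a vertex of A, or remains in Z forever and is won by player α. -/

import Mathlib

open scoped Classical

/-- A parity game on a finite vertex type `V`.  Player `false` is Even and
player `true` is Odd; `owner v` is the player controlling vertex `v`,
`edge` is the (left-total) move relation and `pr` assigns priorities. -/
structure ParityGame (V : Type) [Fintype V] where
  owner : V → Bool
  edge : V → V → Prop
  total : ∀ v, ∃ w, edge v w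
  pr : V → ℕ

namespace ParityGame

variable {V : Type} [Fintype V] (G : ParityGame V)

/-- The player whose parity matches the priority `p` (`false` = Even, `true` = Odd). -/
def playerOf (p : ℕ) : Bool := decide (p % 2 = 1)

/-- A play is an infinite sequence of vertices consistent with the edge relation. -/
def IsPlay (π : ℕ → V) : Prop := ∀ i, G.edge (π i) (π (i + 1))

/-- The set of vertices occurring infinitely often in `π`. -/
def infOcc (π : ℕ → V) : Set V := {v | ∀ n : ℕ, ∃ m, n ≤ m ∧ π m = v}

/-- The highest priority of a vertex in `S`. -/
noncomputable def maxPr (S : Set V) : ℕ := sSup (G.pr '' S)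

/-- Player `α` wins the play `π` iff the highest priority occurring infinitely
often in `π` has `α`'s parity. -/
def Wins (α : Bool) (π : ℕ → V) : Prop := playerOf (G.maxPr (infOcc π)) = α

/-- A (positional, partial) strategy for player `α`. -/
def IsStrategy (α : Bool) (σ : V → Option V) : Prop :=
  ∀ v w, σ v = some w → G.owner v = α ∧ G.edge v w

/-- A play is consistent with the strategy `σ`. -/
def Consistent (σ : V → Option V) (π : ℕ → V) : Prop :=
  ∀ i w, σ (π i) = some w → π (i + 1) = w

/-- All plays starting in `U` that are consistent with `σ`. -/
def PlaysFrom (U : Set V) (σ : V → Option V) : Set (ℕ → V) :=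
  {π | G.IsPlay π ∧ π 0 ∈ U ∧ Consistent σ π}

/-- `U` is closed with respect to player `α`: every `α`-vertex of `U` has a
successor in `U` and every opponent vertex of `U` has all successors in `U`. -/
def ClosedFor (α : Bool) (U : Set V) : Prop :=
  (∀ v ∈ U, G.owner v = α → ∃ w ∈ U, G.edge v w) ∧
  (∀ v ∈ U, G.owner v ≠ α → ∀ w, G.edge v w → w ∈ U)

/-- `D` is an `α`-dominion with (winning) strategy `σ`: `D` is closed for `α`,
`σ` is a strategy of `α` defined on all `α`-vertices of `D` with values in `D`,
and `α` wins every consistent play from `D`. -/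
def IsDominionWith (α : Bool) (D : Set V) (σ : V → Option V) : Prop :=
  G.ClosedFor α D ∧ G.IsStrategy α σ ∧
  (∀ v ∈ D, G.owner v = α → ∃ w ∈ D, σ v = some w) ∧
  ∀ π ∈ G.PlaysFrom D σ, G.Wins α π

/-- `D` is an `α`-dominion. -/
def IsDominion (α : Bool) (D : Set V) : Prop := ∃ σ, G.IsDominionWith α D σ

/-- The value of a play: the highest priority occurring infinitely often. -/
noncomputable def playValue (π : ℕ → V) : ℕ := G.maxPr (infOcc π)

/-- `D` is a `p`-dominion with winning strategy `σ`: a dominion such that `p` is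
the maximum, over all consistent plays from `D`, of the highest priority seen
infinitely often. -/
def IsPDominionWith (α : Bool) (p : ℕ) (D : Set V) (σ : V → Option V) : Prop :=
  G.IsDominionWith α D σ ∧ IsGreatest (G.playValue '' G.PlaysFrom D σ) p

/-- `D` is a `p`-dominion for player `α`. -/
def IsPDominion (α : Bool) (p : ℕ) (D : Set V) : Prop := ∃ σ, G.IsPDominionWith α p D σ

/-- The edges of the subgame `G[U,σ]` induced by `U` and the strategy `σ`. -/
def subEdge (U : Set V) (σ : V → Option V) (u v : V) : Prop :=
  u ∈ U ∧ v ∈ U ∧ G.edge u v ∧ (σ u = none ∨ σ u = some v)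

/-- `G[U,σ]` is strongly connected. -/
def StronglyConnected (U : Set V) (σ : V → Option V) : Prop :=
  ∀ u ∈ U, ∀ v ∈ U, Relation.ReflTransGen (G.subEdge U σ) u v

/-- A cycle of `G[U,σ]`: from `v` through the list `l` back to `v`. -/
def IsCycle (U : Set V) (σ : V → Option V) (v : V) (l : List V) : Prop :=
  List.Chain (G.subEdge U σ) v (l ++ [v])

/-- Player `α` wins all cycles of `G[U,σ]`: the maximum priority on every cycle
has `α`'s parity. -/
def WinsAllCycles (α : Bool) (U : Set V) (σ : V → Option V) : Prop :=
  ∀ v l, G.IsCycle U σ v l → playerOf (G.maxPr {x | x ∈ v :: l}) = α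

/-- `(U, σ)` is a tangle: `U` is nonempty, `σ` is a strategy for the player `α`
of the parity of the highest priority of `U`, defined exactly on the
`α`-vertices of `U` with values in `U`, the subgame `G[U,σ]` is strongly
connected, and player `α` wins all cycles of `G[U,σ]`. -/
def IsTangle (U : Set V) (σ : V → Option V) : Prop :=
  U.Nonempty ∧
  (∀ v w, σ v = some w → v ∈ U ∧ w ∈ U ∧ G.owner v = playerOf (G.maxPr U) ∧ G.edge v w) ∧
  (∀ v ∈ U, G.owner v = playerOf (G.maxPr U) → (σ v).isSome) ∧
  G.StronglyConnected U σ ∧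
  G.WinsAllCycles (playerOf (G.maxPr U)) U σ

/-- The escapes `E_T(T)` of a tangle with vertex set `U`: the successors outside
`U` of the opponent's vertices in `U`. -/
def escapes (U : Set V) : Set V :=
  {v | v ∉ U ∧ ∃ u ∈ U, G.owner u ≠ playerOf (G.maxPr U) ∧ G.edge u v}

/-- The restriction of a strategy to a set `U`. -/
noncomputable def restrict (σ : V → Option V) (U : Set V) : V → Option V :=
  fun v => if v ∈ U then σ v else none

/-- The attractor of `A` for player `α`: the least fixpoint of
`Z := A ∪ {v ∈ V_α | E(v) ∩ Z ≠ ∅} ∪ {v ∈ V_ᾱ | E(v) ⊆ Z}`. -/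
inductive Attr (α : Bool) (A : Set V) : V → Prop
  | base : ∀ v, v ∈ A → Attr α A v
  | step : ∀ v w, G.owner v = α → G.edge v w → Attr α A w → Attr α A v
  | forced : ∀ v, G.owner v ≠ α → (∀ w, G.edge v w → Attr α A w) → Attr α A v

/-- The attractor of `A` for player `α`, as a set. -/
def attrSet (α : Bool) (A : Set V) : Set V := {v | G.Attr α A v}

/-- The tangle attractor of `A` for player `α` with tangle set `TT`: the least
fixpoint additionally attracting all vertices of `α`-tangles of `TT` whose
escapes all lie in the attracting set. -/
inductive TAttr (α : Bool) (TT : Set (Set V × (V → Option V))) (A : Set V) : V → Prop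
  | base : ∀ v, v ∈ A → TAttr α TT A v
  | step : ∀ v w, G.owner v = α → G.edge v w → TAttr α TT A w → TAttr α TT A v
  | forced : ∀ v, G.owner v ≠ α → (∀ w, G.edge v w → TAttr α TT A w) → TAttr α TT A v
  | tangle : ∀ (U : Set V) (τ : V → Option V) (v : V), (U, τ) ∈ TT →
      G.IsTangle U τ → playerOf (G.maxPr U) = α →
      (∀ w ∈ G.escapes U, TAttr α TT A w) → v ∈ U → TAttr α TT A v

/-- The tangle attractor of `A` for player `α`, as a set. -/
def tattrSet (α : Bool) (TT : Set (Set V × (V → Option V))) (A : Set V) : Set V :=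
  {v | G.TAttr α TT A v}

end ParityGame

namespace ParityGame

variable {V : Type} [Fintype V]

/-! Every vertex of the tangle attractor gets a rank, the stage at which it was attracted, and
every tangle used is attached to the rank at which it was attracted. Player `α` moves to a lower
rank, or plays the tangle strategy inside the tangle attached to the current rank; the opponent can
only move to a lower rank or stay inside that tangle. Along a play avoiding `A` the rank is thus
eventually constant, and from then on the play moves inside one tangle: the vertices seen
infinitely often lie on a cycle of that tangle through the highest one, and `α` wins all such
cycles. Such a ranking of the whole tangle attractor exists because a ranking with a maximal domain
is closed under the rules of the tangle attractor. -/

open Filter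

section Plays

variable {G : ParityGame V} {U S : Set V} {τ : V → Option V} {π : ℕ → V} {v : V}

lemma maxPr_eq_of_forall_le (hv : v ∈ S) (hle : ∀ x ∈ S, G.pr x ≤ G.pr v) :
    G.maxPr S = G.pr v :=
  IsGreatest.csSup_eq ⟨⟨v, hv, rfl⟩, by rintro _ ⟨x, hx, rfl⟩; exact hle x hx⟩

lemma eventually_mem_infOcc (π : ℕ → V) : ∀ᶠ i in atTop, π i ∈ infOcc π := by
  have hfinite : ∀ v, ∀ᶠ i in atTop, v ∉ infOcc π → π i ≠ v := by
    intro v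
    by_cases hv : v ∈ infOcc π
    · exact Eventually.of_forall fun _ h => absurd hv h
    · simp only [infOcc, Set.mem_ofPred_eq, not_forall, not_exists, not_and] at hv
      obtain ⟨n, hn⟩ := hv
      exact eventually_atTop.2 ⟨n, fun m hm _ => hn m hm⟩
  exact (eventually_all.2 hfinite).mono fun i hi => by_contra fun h => hi (π i) h rfl

lemma isCycle_of_segment {i m : ℕ} (hm : π (i + 1 + m) = π i)
    (hedge : ∀ t, i ≤ t → t ≤ i + m → G.subEdge U τ (π t) (π (t + 1))) :
    G.IsCycle U τ (π i) ((List.range' (i + 1) m).map π) := by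
  have hlist : π i :: ((List.range' (i + 1) m).map π ++ [π i]) =
      (List.range' i (m + 2)).map π := by
    rw [List.range'_succ, List.range'_concat]
    simp [hm]
  change List.IsChain _ (π i :: _)
  rw [hlist, List.isChain_iff_getElem]
  intro t ht
  simp only [List.length_map, List.length_range'] at ht
  simpa [List.getElem_range', Nat.add_assoc] using hedge (i + t) (by omega) (by omega)

/-- A play that eventually moves inside the subgame `G[U, τ]` traverses, infinitely often, a
cycle of `G[U, τ]` through the vertex of highest priority occurring infinitely often. -/
lemma wins_of_eventually_subEdge {β : Bool} (hcycles : G.WinsAllCycles β U τ)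
    (hπ : ∀ᶠ i in atTop, G.subEdge U τ (π i) (π (i + 1))) : G.Wins β π := by
  obtain ⟨K, hK⟩ := eventually_atTop.1 ((eventually_mem_infOcc π).and hπ)
  obtain ⟨v, hv, hmax⟩ :=
    Set.exists_max_image (infOcc π) G.pr (Set.toFinite _) ⟨π K, (hK K le_rfl).1⟩
  obtain ⟨i, hKi, rfl⟩ := hv K
  obtain ⟨j, hij, hj⟩ := hv (i + 1)
  obtain ⟨m, rfl⟩ := Nat.exists_eq_add_of_le hij
  have hcycle := isCycle_of_segment hj fun t hit _ => (hK t (by omega)).2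
  have hcycle_inf : ∀ x ∈ π i :: (List.range' (i + 1) m).map π, x ∈ infOcc π := by
    simp only [List.mem_cons, List.mem_map, List.mem_range'_1]
    rintro x (rfl | ⟨t, ht, rfl⟩)
    · exact hv
    · exact (hK t (by omega)).1
  unfold Wins
  rw [maxPr_eq_of_forall_le hv hmax,
    ← maxPr_eq_of_forall_le (S := {x | x ∈ π i :: (List.range' (i + 1) m).map π})
      List.mem_cons_self fun x hx => hmax x (hcycle_inf x hx)]
  exact hcycles _ _ hcycle

end Plays

section RankedStrategy

variable {G : ParityGame V} {α : Bool} {TT : Set (Set V × (V → Option V))} {A : Set V}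

/-- In the tangle case the tangle is the one attached to the rank of `v`, so that a play whose
rank stays constant stays inside a single tangle. -/
inductive Progress (G : ParityGame V) (α : Bool) (TT : Set (Set V × (V → Option V))) (Z : Set V)
    (σ : V → Option V) (rank : V → ℕ) (tangleAt : ℕ → Set V × (V → Option V)) (v : V) : Prop
  | attract (w : V) (hown : G.owner v = α) (hσ : σ v = some w) (hw : w ∈ Z)
      (hrank : rank w < rank v)
  | force (hown : G.owner v ≠ α) (hsucc : ∀ w, G.edge v w → w ∈ Z ∧ rank w < rank v)
  | tangle (U : Set V) (τ : V → Option V) (hlevel : tangleAt (rank v) = (U, τ))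
      (hTT : (U, τ) ∈ TT) (htangle : G.IsTangle U τ) (hplayer : playerOf (G.maxPr U) = α)
      (hvU : v ∈ U) (hUZ : U ⊆ Z) (hUrank : ∀ u ∈ U, rank u ≤ rank v)
      (hesc : ∀ w ∈ G.escapes U, w ∈ Z ∧ rank w < rank v) (hσ : G.owner v = α → σ v = τ v)

lemma Progress.mono {Z Z' : Set V} {σ σ' : V → Option V} {rank rank' : V → ℕ}
    {tangleAt tangleAt' : ℕ → Set V × (V → Option V)} {v : V}
    (h : G.Progress α TT Z σ rank tangleAt v) (hv : v ∈ Z) (hZ : Z ⊆ Z')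
    (hrank : ∀ x ∈ Z, rank' x = rank x) (hσ : σ' v = σ v)
    (htangleAt : tangleAt' (rank v) = tangleAt (rank v)) :
    G.Progress α TT Z' σ' rank' tangleAt' v := by
  cases h with
  | attract w hown hσv hw hlt =>
    exact .attract w hown (hσ.trans hσv) (hZ hw) (by rwa [hrank w hw, hrank v hv])
  | force hown hsucc =>
    refine .force hown fun w hw => ⟨hZ (hsucc w hw).1, ?_⟩
    rw [hrank w (hsucc w hw).1, hrank v hv]
    exact (hsucc w hw).2
  | tangle U τ hlevel hTT htangle hplayer hvU hUZ hUrank hesc hστ =>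
    refine .tangle U τ (by rw [hrank v hv, htangleAt, hlevel]) hTT htangle hplayer hvU
      (hUZ.trans hZ) (fun u hu => ?_) (fun w hw => ⟨hZ (hesc w hw).1, ?_⟩)
      fun hown => hσ.trans (hστ hown)
    · rw [hrank u (hUZ hu), hrank v hv]
      exact hUrank u hu
    · rw [hrank w (hesc w hw).1, hrank v hv]
      exact (hesc w hw).2

structure RankedStrategy (G : ParityGame V) (α : Bool) (TT : Set (Set V × (V → Option V)))
    (A : Set V) where
  dom : Set V
  σ : V → Option V
  rank : V → ℕ
  tangleAt : ℕ → Set V × (V → Option V)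
  subset_dom : A ⊆ dom
  isStrategy : G.IsStrategy α σ
  progress : ∀ v ∈ dom, v ∉ A → G.Progress α TT dom σ rank tangleAt v

namespace RankedStrategy

variable (c : RankedStrategy G α TT A) {v w : V}

def base : RankedStrategy G α TT A where
  dom := A
  σ _ := none
  rank _ := 0
  tangleAt _ := (∅, fun _ => none)
  subset_dom := subset_rfl
  isStrategy _ _ h := by simp at h
  progress _ hv hvA := absurd hv hvA

lemma dom_subset_tattrSet : c.dom ⊆ G.tattrSet α TT A := by
  intro v hv
  change G.TAttr α TT A v
  induction hn : c.rank v using Nat.strong_induction_on generalizing v with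
  | _ n ih =>
  have hlower : ∀ w ∈ c.dom, c.rank w < c.rank v → G.TAttr α TT A w := fun w hw hlt =>
    ih _ (hn ▸ hlt) hw rfl
  by_cases hvA : v ∈ A
  · exact .base v hvA
  cases c.progress v hv hvA with
  | attract w hown hσ hw hlt => exact .step v w hown (c.isStrategy v w hσ).2 (hlower w hw hlt)
  | force hown hsucc => exact .forced v hown fun w hw => hlower w (hsucc w hw).1 (hsucc w hw).2
  | tangle U τ _ hTT htangle hplayer hvU _ _ hesc _ =>
    exact .tangle U τ v hTT htangle hplayer (fun w hw => hlower w (hesc w hw).1 (hesc w hw).2) hvU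

lemma isSome_σ (hv : v ∈ c.dom) (hvA : v ∉ A) (hown : G.owner v = α) : (c.σ v).isSome := by
  cases c.progress v hv hvA with
  | attract w _ hσ _ _ => simp [hσ]
  | force hown' _ => exact absurd hown hown'
  | tangle U τ _ _ htangle hplayer hvU _ _ _ hστ =>
    rw [hστ hown]
    exact htangle.2.2.1 v hvU (hown.trans hplayer.symm)

lemma consistent_step (hv : v ∈ c.dom) (hvA : v ∉ A) (hedge : G.edge v w)
    (hcons : ∀ x, c.σ v = some x → w = x) :
    w ∈ c.dom ∧ c.rank w ≤ c.rank v ∧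
      (c.rank w = c.rank v →
        G.WinsAllCycles α (c.tangleAt (c.rank v)).1 (c.tangleAt (c.rank v)).2 ∧
        G.subEdge (c.tangleAt (c.rank v)).1 (c.tangleAt (c.rank v)).2 v w) := by
  cases c.progress v hv hvA with
  | attract x _ hσ hx hlt =>
    obtain rfl := hcons x hσ
    exact ⟨hx, hlt.le, fun h => absurd h hlt.ne⟩
  | force _ hsucc =>
    exact ⟨(hsucc w hedge).1, (hsucc w hedge).2.le, fun h => absurd h (hsucc w hedge).2.ne⟩
  | tangle U τ hlevel _ htangle hplayer hvU hUZ hUrank hesc hστ =>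
    simp only [hlevel]
    have hτ_move : ∀ x, τ v = some x → w = x ∧ x ∈ U := fun x hx =>
      have hown := (htangle.2.1 v x hx).2.2.1.trans hplayer
      ⟨hcons x ((hστ hown).trans hx), (htangle.2.1 v x hx).2.1⟩
    by_cases hwU : w ∈ U
    · refine ⟨hUZ hwU, hUrank w hwU, fun _ => ⟨hplayer ▸ htangle.2.2.2.2, hvU, hwU, hedge, ?_⟩⟩
      cases hτ : τ v with
      | none => exact .inl rfl
      | some x => exact .inr (by rw [(hτ_move x hτ).1])
    · have hown : G.owner v ≠ playerOf (G.maxPr U) := fun hown => by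
        obtain ⟨x, hx⟩ := Option.isSome_iff_exists.mp (htangle.2.2.1 v hvU hown)
        obtain ⟨rfl, hxU⟩ := hτ_move x hx
        exact hwU hxU
      obtain ⟨hw, hlt⟩ := hesc w ⟨hwU, v, hvU, hown, hedge⟩
      exact ⟨hw, hlt.le, fun h => absurd h hlt.ne⟩

lemma forall_mem_dom_and_wins {π : ℕ → V} (hπ : G.IsPlay π) (hcons : Consistent c.σ π)
    (h0 : π 0 ∈ c.dom) (hA : ∀ i, π i ∉ A) : (∀ i, π i ∈ c.dom) ∧ G.Wins α π := by
  have hstep : ∀ i, π i ∈ c.dom → _ := fun i hi =>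
    c.consistent_step hi (hA i) (hπ i) fun x hx => hcons i x hx
  have hdom : ∀ i, π i ∈ c.dom := fun i => Nat.rec h0 (fun i hi => (hstep i hi).1) i
  refine ⟨hdom, ?_⟩
  obtain ⟨k, hk⟩ := WellFoundedLT.antitone_chain_condition (f := fun i => c.rank (π i))
    (antitone_nat_of_succ_le fun i => (hstep i (hdom i)).2.1)
  have hconst : ∀ i, k ≤ i → c.rank (π (i + 1)) = c.rank (π i) ∧ c.rank (π i) = c.rank (π k) :=
    fun i hi => ⟨(hk (i + 1) (by omega)).symm.trans (hk i hi), (hk i hi).symm⟩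
  refine wins_of_eventually_subEdge ((hstep k (hdom k)).2.2 (hconst k le_rfl).1).1
    (eventually_atTop.2 ⟨k, fun i hi => ?_⟩)
  rw [← (hconst i hi).2]
  exact ((hstep i (hdom i)).2.2 (hconst i hi).1).2

lemma exists_rank_lt : ∃ n, ∀ x, c.rank x < n :=
  ⟨Finset.univ.sup c.rank + 1, fun x => Nat.lt_succ_of_le (Finset.le_sup (Finset.mem_univ x))⟩

/-- New vertices `W` are added at a fresh rank `n`, above all old ranks, so the progress of the
old vertices is unaffected. -/
lemma exists_dom_eq_union (W : Set V) [DecidablePred (· ∈ W)] (hW : Disjoint W c.dom) {n : ℕ}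
    (hn : ∀ x, c.rank x < n) (σW : V → Option V) (t : Set V × (V → Option V))
    (hσW : ∀ v ∈ W, ∀ w, σW v = some w → G.owner v = α ∧ G.edge v w)
    (hnew : ∀ v ∈ W, G.Progress α TT (c.dom ∪ W) (W.piecewise σW c.σ)
      (W.piecewise (fun _ => n) c.rank) (Function.update c.tangleAt n t) v) :
    ∃ c' : RankedStrategy G α TT A, c'.dom = c.dom ∪ W := by
  have hold : ∀ x ∈ c.dom, x ∉ W := fun x hx hxW => hW.ne_of_mem hxW hx rfl
  refine ⟨⟨c.dom ∪ W, W.piecewise σW c.σ, W.piecewise (fun _ => n) c.rank,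
    Function.update c.tangleAt n t, c.subset_dom.trans Set.subset_union_left,
    fun v w h => ?_, ?_⟩, rfl⟩
  · by_cases hv : v ∈ W
    · exact hσW v hv w (by rwa [Set.piecewise_eq_of_mem _ _ _ hv] at h)
    · exact c.isStrategy v w (by rwa [Set.piecewise_eq_of_notMem _ _ _ hv] at h)
  · rintro v (hv | hv) hvA
    · exact (c.progress v hv hvA).mono hv Set.subset_union_left
        (fun x hx => Set.piecewise_eq_of_notMem _ _ _ (hold x hx))
        (Set.piecewise_eq_of_notMem _ _ _ (hold v hv))
        (Function.update_of_ne (hn v).ne _ _)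
    · exact hnew v hv

lemma exists_dom_eq_insert_of_edge (hv : v ∉ c.dom) (hown : G.owner v = α) (hedge : G.edge v w)
    (hw : w ∈ c.dom) : ∃ c' : RankedStrategy G α TT A, c'.dom = insert v c.dom := by
  obtain ⟨n, hn⟩ := c.exists_rank_lt
  have hwv : w ∉ ({v} : Set V) := fun h => hv (h ▸ hw)
  rw [Set.insert_eq, Set.union_comm]
  refine c.exists_dom_eq_union {v} (by simpa using hv) hn (fun _ => some w) (c.tangleAt n)
    (fun x hx y hy => ?_) fun x hx => ?_
  · rw [Set.mem_singleton_iff] at hx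
    subst x
    obtain rfl := Option.some_inj.1 hy
    exact ⟨hown, hedge⟩
  · rw [Set.mem_singleton_iff] at hx
    subst x
    refine .attract w hown (Set.piecewise_eq_of_mem _ _ _ (Set.mem_singleton v)) (.inl hw) ?_
    rw [Set.piecewise_eq_of_notMem _ _ _ hwv, Set.piecewise_eq_of_mem _ _ _ (Set.mem_singleton v)]
    exact hn w

lemma exists_dom_eq_insert_of_forall_edge (hv : v ∉ c.dom) (hown : G.owner v ≠ α)
    (hsucc : ∀ w, G.edge v w → w ∈ c.dom) :
    ∃ c' : RankedStrategy G α TT A, c'.dom = insert v c.dom := by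
  obtain ⟨n, hn⟩ := c.exists_rank_lt
  rw [Set.insert_eq, Set.union_comm]
  refine c.exists_dom_eq_union {v} (by simpa using hv) hn (fun _ => none) (c.tangleAt n)
    (fun _ _ _ h => by simp at h) fun x hx => ?_
  rw [Set.mem_singleton_iff] at hx
  subst x
  refine .force hown fun w hw => ⟨.inl (hsucc w hw), ?_⟩
  have hwv : w ∉ ({v} : Set V) := fun h => hv (h ▸ hsucc w hw)
  rw [Set.piecewise_eq_of_notMem _ _ _ hwv, Set.piecewise_eq_of_mem _ _ _ (Set.mem_singleton v)]
  exact hn w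

lemma exists_dom_eq_union_of_tangle {U : Set V} {τ : V → Option V} (hTT : (U, τ) ∈ TT)
    (htangle : G.IsTangle U τ) (hplayer : playerOf (G.maxPr U) = α)
    (hesc : ∀ w ∈ G.escapes U, w ∈ c.dom) :
    ∃ c' : RankedStrategy G α TT A, c'.dom = c.dom ∪ U := by
  obtain ⟨n, hn⟩ := c.exists_rank_lt
  rw [← Set.union_sdiff_self]
  have hrank_le : ∀ x, (U \ c.dom).piecewise (fun _ => n) c.rank x ≤ n := fun x => by
    by_cases hx : x ∈ U \ c.dom
    · rw [Set.piecewise_eq_of_mem _ _ _ hx]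
    · rw [Set.piecewise_eq_of_notMem _ _ _ hx]
      exact (hn x).le
  refine c.exists_dom_eq_union (U \ c.dom) Set.disjoint_sdiff_left hn τ (U, τ)
    (fun v _ w h => ⟨(htangle.2.1 v w h).2.2.1.trans hplayer, (htangle.2.1 v w h).2.2.2⟩)
    fun v hv => ?_
  have hv_rank : (U \ c.dom).piecewise (fun _ => n) c.rank v = n :=
    Set.piecewise_eq_of_mem _ _ _ hv
  refine .tangle U τ (by rw [hv_rank, Function.update_self]) hTT htangle hplayer hv.1
    (by rw [Set.union_sdiff_self]; exact Set.subset_union_right)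
    (fun u _ => (hrank_le u).trans hv_rank.ge)
    (fun w hw => ⟨.inl (hesc w hw), ?_⟩) fun _ => Set.piecewise_eq_of_mem _ _ _ hv
  rw [hv_rank, Set.piecewise_eq_of_notMem _ _ _ fun h => h.2 (hesc w hw)]
  exact hn w

end RankedStrategy

/-- A maximal domain of a ranked strategy is closed under the rules of the tangle attractor. -/
lemma exists_rankedStrategy_tattrSet_subset (G : ParityGame V) (α : Bool)
    (TT : Set (Set V × (V → Option V))) (A : Set V) :
    ∃ c : RankedStrategy G α TT A, G.tattrSet α TT A ⊆ c.dom := by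
  obtain ⟨Z, hmax⟩ :=
    (Set.toFinite {Z | ∃ c : RankedStrategy G α TT A, c.dom = Z}).exists_maximal
    ⟨A, RankedStrategy.base, rfl⟩
  obtain ⟨c, rfl⟩ := hmax.prop
  refine ⟨c, fun v hv => ?_⟩
  induction hv with
  | base v hv => exact c.subset_dom hv
  | step v w hown hedge _ hw =>
    by_contra hv
    exact hv (hmax.2 (c.exists_dom_eq_insert_of_edge hv hown hedge hw) (Set.subset_insert _ _)
      (Set.mem_insert _ _))
  | forced v hown _ hsucc =>
    by_contra hv
    exact hv (hmax.2 (c.exists_dom_eq_insert_of_forall_edge hv hown hsucc)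
      (Set.subset_insert _ _) (Set.mem_insert _ _))
  | tangle U τ v hTT htangle hplayer _ hvU hesc =>
    exact hmax.2 (c.exists_dom_eq_union_of_tangle hTT htangle hplayer hesc) Set.subset_union_left
      (.inr hvU)

end RankedStrategy

theorem tangle_attractor_strategy_general (G : ParityGame V) (α : Bool)
    (TT : Set (Set V × (V → Option V)))
    (A : Set V) :
    ∃ σ : V → Option V, G.IsStrategy α σ ∧
      (∀ v, v ∈ G.tattrSet α TT A \ A → G.owner v = α → (σ v).isSome) ∧
      ∀ π : ℕ → V, G.IsPlay π → Consistent σ π → π 0 ∈ G.tattrSet α TT A →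
        (∃ i, π i ∈ A) ∨ ((∀ i, π i ∈ G.tattrSet α TT A) ∧ G.Wins α π) := by
  obtain ⟨c, hc⟩ := exists_rankedStrategy_tattrSet_subset G α TT A
  have hdom : c.dom = G.tattrSet α TT A := c.dom_subset_tattrSet.antisymm hc
  refine ⟨c.σ, c.isStrategy, fun v hv hown => c.isSome_σ (hc hv.1) hv.2 hown,
    fun π hπ hcons h0 => ?_⟩
  by_cases hA : ∃ i, π i ∈ A
  · exact .inl hA
  · obtain ⟨hstays, hwins⟩ := c.forall_mem_dom_and_wins hπ hcons (hc h0) (by simpa using hA)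
    exact .inr ⟨fun i => hdom ▸ hstays i, hwins⟩

/-- player `α` has a strategy on the tangle attractor `Z` of `A`
such that every consistent play starting in `Z` either visits `A`, or remains
in `Z` forever and is won by `α`. -/
theorem tangle_attractor_strategy (G : ParityGame V) (α : Bool)
    (TT : Set (Set V × (V → Option V)))
    (hTT : ∀ T ∈ TT, G.IsTangle T.1 T.2 ∧ playerOf (G.maxPr T.1) = α)
    (A : Set V) :
    ∃ σ : V → Option V, G.IsStrategy α σ ∧
      (∀ v, v ∈ G.tattrSet α TT A \ A → G.owner v = α → (σ v).isSome) ∧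
      ∀ π : ℕ → V, G.IsPlay π → Consistent σ π → π 0 ∈ G.tattrSet α TT A →
        (∃ i, π i ∈ A) ∨ ((∀ i, π i ∈ G.tattrSet α TT A) ∧ G.Wins α π) :=
  tangle_attractor_strategy_general G α TT A

end ParityGame
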